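/- Let ‖·‖ be a norm on c₀₀ satisfying equation (2.2). If x ∈ c₀₀ and ‖x‖ ≠ ‖x‖_∞, then there exists an integer ℓ > 1 such that ‖x‖ = ‖x‖_ℓ. -/

import Mathlib

open Finset

/-- `c₀₀`: finitely supported functions `ℕ → ℝ`. -/
abbrev C00 := ℕ →₀ ℝ

/-- `f(t) = log₂(1+t)`. -/
noncomputable def f (t : ℝ) : ℝ := Real.logb 2 (1 + t)

/-- `E < F` for finite sets: every element of `E` is less than every element of `F`. -/
def FinsetLT (E F : Finset ℕ) : Prop := ∀ i ∈ E, ∀ j ∈ F, i < j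

/-- `Ex`: coordinatewise product of `x` with the indicator of `E`. -/
noncomputable def restr (E : Finset ℕ) (x : C00) : C00 := x.filter (· ∈ E)

/-- `N` is a norm on `c₀₀`. -/
def IsNorm (N : C00 → ℝ) : Prop :=
  (∀ x y, N (x + y) ≤ N x + N y) ∧
  (∀ (c : ℝ) (x), N (c • x) = |c| * N x) ∧
  (∀ x, x ≠ 0 → 0 < N x)

/-- the sup norm `‖x‖_∞`. -/
noncomputable def supNorm (x : C00) : ℝ := ⨆ i, |x i|

/-- `((m_i, E_i))_{i=1}^ℓ` is admissible: `2 ≤ m₁ < ⋯ < m_ℓ`, `E₁ < ⋯ < E_ℓ`,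
and `f(m_{i+1}) > ∑_{j=1}^i |E_j|`. -/
def Admissible (ℓ : ℕ) (m : Fin ℓ → ℕ) (E : Fin ℓ → Finset ℕ) : Prop :=
  (∀ i, 2 ≤ m i) ∧ StrictMono m ∧
  (∀ i j : Fin ℓ, i < j → FinsetLT (E i) (E j)) ∧
  ∀ i j : Fin ℓ, (i : ℕ) + 1 = (j : ℕ) →
    (∑ t ∈ Finset.Iic i, ((E t).card : ℝ)) < f (m j)

/-- `|||x|||_m = sup{(1/m) ∑_{i=1}^m ‖F_i x‖ : F₁ < ⋯ < F_m}`. -/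
noncomputable def tnorm (N : C00 → ℝ) (m : ℕ) (x : C00) : ℝ :=
  sSup {r | ∃ F : Fin m → Finset ℕ,
    (∀ i j : Fin m, i < j → FinsetLT (F i) (F j)) ∧
    r = (1 / (m : ℝ)) * ∑ i, N (restr (F i) x)}

/-- `‖x‖_ℓ = sup{(1/f(ℓ)) ∑_{i=1}^ℓ |||E_i x|||_{m_i} : ((m_i,E_i))_{i=1}^ℓ admissible}`. -/
noncomputable def normL (N : C00 → ℝ) (ℓ : ℕ) (x : C00) : ℝ :=
  sSup {r | ∃ (m : Fin ℓ → ℕ) (E : Fin ℓ → Finset ℕ), Admissible ℓ m E ∧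
    r = (1 / f ℓ) * ∑ i, tnorm N (m i) (restr (E i) x)}

/-- `‖x‖_{(ℓ,m₀)}`: as `‖x‖_ℓ` but restricted to admissible families with `m₁ ≥ m₀`. -/
noncomputable def normLM (N : C00 → ℝ) (ℓ m₀ : ℕ) (x : C00) : ℝ :=
  sSup {r | ∃ (m : Fin ℓ → ℕ) (E : Fin ℓ → Finset ℕ), Admissible ℓ m E ∧
    (∀ i, m₀ ≤ m i) ∧
    r = (1 / f ℓ) * ∑ i, tnorm N (m i) (restr (E i) x)}

/-- Equation (2.2):
`‖x‖ = max{‖x‖_∞, sup{(1/f(ℓ)) ∑ |||E_i x|||_{m_i} : ℓ ∈ ℕ, ((m_i,E_i)) admissible}}`. -/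
def Eq22 (N : C00 → ℝ) : Prop :=
  ∀ x, N x = max (supNorm x)
    (sSup {r | ∃ (ℓ : ℕ) (m : Fin ℓ → ℕ) (E : Fin ℓ → Finset ℕ), Admissible ℓ m E ∧
      r = (1 / f ℓ) * ∑ i, tnorm N (m i) (restr (E i) x)})

/-- A finite block basis: nonzero vectors with successive supports. -/
def BlockSeqFin {n : ℕ} (y : Fin n → C00) : Prop :=
  (∀ i, y i ≠ 0) ∧ ∀ i j : Fin n, i < j → FinsetLT (y i).support (y j).support

/-- An infinite block basis of `(e_i)`: nonzero vectors with successive supports. -/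
def BlockSeqInf (y : ℕ → C00) : Prop :=
  (∀ i, y i ≠ 0) ∧ ∀ i, FinsetLT (y i).support (y (i + 1)).support

/-- `(z_k)_{k=1}^n` is a (finite) block basis of `(y_i)`. -/
def FiniteBlockOf {n : ℕ} (z : Fin n → C00) (y : ℕ → C00) : Prop :=
  ∃ (B : Fin n → Finset ℕ) (c : ℕ → ℝ),
    (∀ k k' : Fin n, k < k' → FinsetLT (B k) (B k')) ∧
    (∀ k, z k = ∑ i ∈ B k, c i • y i) ∧ ∀ k, z k ≠ 0

/-- `x` is an `ℓ_p^k`-average with constant `C`. -/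
def IsLpAverage (N : C00 → ℝ) (p : ℝ) (k : ℕ) (C : ℝ) (x : C00) : Prop :=
  ∃ y : Fin k → C00, BlockSeqFin y ∧ (∀ i, N (y i) = 1) ∧
    (∀ a : Fin k → ℝ,
      C⁻¹ * (∑ i, |a i| ^ p) ^ (1 / p) ≤ N (∑ i, a i • y i) ∧
      N (∑ i, a i • y i) ≤ C * (∑ i, |a i| ^ p) ^ (1 / p)) ∧
    x = ((k : ℝ) ^ (-(1 / p))) • ∑ i, y i

/-- `C_p = 4(1 - 2^{-1/p})⁻¹`. -/
noncomputable def Cp (p : ℝ) : ℝ := 4 * (1 - (2 : ℝ) ^ (-(1 / p)))⁻¹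

/-
A restriction never increases the norm, because (2.2) only involves restrictions of its
argument. Replace `x` by a restriction `y` of minimal support with `‖y‖ = ‖x‖`, so that every
proper restriction of `y` has strictly smaller norm. Since `‖y‖ > ‖y‖_∞`, (2.2) makes `‖y‖` the
supremum of the `‖y‖_ℓ`; at most `|supp y|` of the sets `E_i` meet the support, so
`‖y‖_ℓ ≤ |supp y| ‖y‖ / f(ℓ)` and the supremum is attained at some `ℓ`. Here `ℓ ≠ 0` trivially,
and `ℓ ≠ 1`: in `|||E y|||_m` with `m ≥ 2` at most one of the disjoint sets `F_i` contains the
support of `y`, so `‖y‖_1 ≤ (‖y‖ + M) / 2` where `M < ‖y‖` bounds the proper restrictions.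
Finally `‖x‖ = ‖y‖_ℓ ≤ ‖x‖_ℓ ≤ ‖x‖`.
-/

open Finset

lemma FinsetLT.disjoint {E F : Finset ℕ} (h : FinsetLT E F) : Disjoint E F :=
  disjoint_left.2 fun a ha hb => lt_irrefl a (h a ha a hb)

lemma restr_apply (E : Finset ℕ) (x : C00) (i : ℕ) :
    restr E x i = if i ∈ E then x i else 0 :=
  Finsupp.filter_apply _ _ _

lemma restr_restr (E F : Finset ℕ) (x : C00) : restr E (restr F x) = restr (E ∩ F) x := by
  ext i
  simp only [restr_apply, mem_inter]
  split_ifs <;> tauto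

lemma restr_of_support_subset {E : Finset ℕ} {x : C00} (h : x.support ⊆ E) : restr E x = x :=
  (Finsupp.filter_eq_self_iff _ _).2 fun _ hi => h (Finsupp.mem_support_iff.2 hi)

lemma restr_inter_support (E : Finset ℕ) (x : C00) : restr (E ∩ x.support) x = restr E x := by
  rw [← restr_restr, restr_of_support_subset subset_rfl]

lemma restr_eq_zero_of_inter_support {E : Finset ℕ} {x : C00} (h : E ∩ x.support = ∅) :
    restr E x = 0 :=
  (Finsupp.filter_eq_zero_iff _ _).2 fun i hi => by
    by_contra hx
    exact (eq_empty_iff_forall_notMem.1 h) i (mem_inter.2 ⟨hi, Finsupp.mem_support_iff.2 hx⟩)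

lemma restr_zero (E : Finset ℕ) : restr E (0 : C00) = 0 :=
  Finsupp.filter_zero _

lemma support_restr_ssubset {E : Finset ℕ} {x : C00} (h : ¬ x.support ⊆ E) :
    (restr E x).support ⊂ x.support :=
  filter_ssubset.2 (not_subset.1 h)

lemma IsNorm.map_zero {N : C00 → ℝ} (hN : IsNorm N) : N 0 = 0 := by
  simpa using hN.2.1 0 0

lemma IsNorm.nonneg {N : C00 → ℝ} (hN : IsNorm N) (x : C00) : 0 ≤ N x := by
  rcases eq_or_ne x 0 with rfl | hx
  · exact hN.map_zero.ge
  · exact (hN.2.2 x hx).le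

lemma supNorm_nonneg (x : C00) : 0 ≤ supNorm x :=
  Real.iSup_nonneg fun _ => abs_nonneg _

lemma abs_le_supNorm (x : C00) (i : ℕ) : |x i| ≤ supNorm x :=
  le_ciSup ((x.finite_range.image abs).bddAbove.mono fun _ ⟨i, hi⟩ => ⟨x i, ⟨i, rfl⟩, hi⟩) i

lemma supNorm_restr_le (E : Finset ℕ) (x : C00) : supNorm (restr E x) ≤ supNorm x :=
  ciSup_le fun i => by
    rw [restr_apply]
    split_ifs
    · exact abs_le_supNorm x i
    · simpa using supNorm_nonneg x

lemma f_nonneg (ℓ : ℕ) : 0 ≤ f ℓ :=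
  Real.logb_nonneg one_lt_two (by simp)

lemma f_one : f (1 : ℕ) = 1 := by
  norm_num [f]

lemma f_mono {a b : ℕ} (h : a ≤ b) : f a ≤ f b :=
  Real.logb_le_logb_of_le one_lt_two (by positivity) (by simpa using h)

lemma f_pos {ℓ : ℕ} (h : 1 ≤ ℓ) : 0 < f ℓ :=
  one_pos.trans_le (f_one ▸ f_mono h)

lemma div_f_le_self {a : ℝ} (ha : 0 ≤ a) (ℓ : ℕ) : a / f ℓ ≤ a := by
  rcases Nat.eq_zero_or_pos ℓ with rfl | hℓ
  · simpa [f] using ha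
  · exact div_le_self ha (f_one ▸ f_mono hℓ)

lemma lt_f_two_pow (s : ℕ) : (s : ℝ) < f (2 ^ s : ℕ) := by
  rw [f, Real.lt_logb_iff_rpow_lt one_lt_two (by positivity)]
  push_cast
  rw [Real.rpow_natCast]
  linarith

section TNorm

variable {N : C00 → ℝ} {m : ℕ}

lemma tnorm_le {z : C00} {C : ℝ} (hC : 0 ≤ C) (h : ∀ F, N (restr F z) ≤ C) :
    tnorm N m z ≤ C := by
  refine csSup_le ⟨_, fun _ => ∅, fun _ _ _ => by simp [FinsetLT], rfl⟩ ?_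
  rintro _ ⟨F, -, rfl⟩
  calc 1 / (m : ℝ) * ∑ i, N (restr (F i) z) ≤ 1 / m * (m * C) := by
        gcongr
        simpa using sum_le_card_nsmul univ _ C fun i _ => h (F i)
    _ ≤ C := by
        rcases eq_or_ne m 0 with rfl | hm
        · simpa using hC
        · field_simp; rfl

lemma tnorm_restr_le_mul_card (hN : IsNorm N) {x : C00} {C : ℝ} (hC : 0 ≤ C)
    (h : ∀ G, N (restr G x) ≤ C) (E : Finset ℕ) :
    tnorm N m (restr E x) ≤ C * #(E ∩ x.support) := by
  by_cases hE : E ∩ x.support = ∅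
  · rw [restr_eq_zero_of_inter_support hE, hE, card_empty, Nat.cast_zero, mul_zero]
    exact tnorm_le le_rfl fun F => by rw [restr_zero, hN.map_zero]
  · calc tnorm N m (restr E x) ≤ C := tnorm_le hC fun F => restr_restr F E x ▸ h _
      _ ≤ C * #(E ∩ x.support) := le_mul_of_one_le_right hC
          (by exact_mod_cast card_pos.2 (nonempty_iff_ne_empty.2 hE))

/-- At most one of `m ≥ 2` successive sets can contain the nonempty set `S`. -/
lemma tnorm_le_half_add {S : Finset ℕ} {z : C00} {K M : ℝ} (hm : 2 ≤ m) (hS : S.Nonempty)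
    (hMK : M ≤ K) (hK : ∀ F, N (restr F z) ≤ K)
    (hM : ∀ F, ¬ S ⊆ F → N (restr F z) ≤ M) :
    tnorm N m z ≤ (K + M) / 2 := by
  classical
  refine csSup_le ⟨_, fun _ => ∅, fun _ _ _ => by simp [FinsetLT], rfl⟩ ?_
  rintro _ ⟨F, hF, rfl⟩
  set A := univ.filter fun i => S ⊆ F i
  have hA : #A ≤ 1 := card_le_one.2 fun i hi j hj => by
    obtain ⟨a, ha⟩ := hS
    by_contra hij
    have hai := (mem_filter.1 hi).2 ha
    have haj := (mem_filter.1 hj).2 ha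
    rcases lt_or_gt_of_ne hij with h | h
    · exact lt_irrefl a (hF i j h a hai a haj)
    · exact lt_irrefl a (hF j i h a haj a hai)
  have hsum : ∑ i, N (restr (F i) z) ≤ #A * K + (m - #A) * M := by
    calc ∑ i, N (restr (F i) z) ≤ ∑ i, if S ⊆ F i then K else M :=
          sum_le_sum fun i _ => by split_ifs with h; exacts [hK _, hM _ h]
      _ = #A * K + (m - #A) * M := by
          rw [sum_ite, sum_const, sum_const, nsmul_eq_mul, nsmul_eq_mul, filter_not, card_sdiff,
            card_univ, Fintype.card_fin, inter_eq_left.2 (subset_univ A),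
            Nat.cast_sub (card_le_univ A |>.trans_eq (Fintype.card_fin m))]
  have hm' : (2 : ℝ) ≤ m := by exact_mod_cast hm
  have hA' : (#A : ℝ) ≤ 1 := by exact_mod_cast hA
  rw [one_div_mul_eq_div, div_le_div_iff₀ (by linarith) two_pos]
  nlinarith

end TNorm

section Admissible

lemma admissible_empty (ℓ : ℕ) : Admissible ℓ (fun i => (i : ℕ) + 2) (fun _ => ∅) := by
  refine ⟨fun _ => le_add_self, fun a b hab => by simpa using hab,
    fun _ _ _ => by simp [FinsetLT], fun _ j _ => ?_⟩
  simp only [card_empty, Nat.cast_zero, sum_const_zero]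
  exact Real.logb_pos one_lt_two (by push_cast; linarith [(j : ℕ).cast_nonneg (α := ℝ)])

variable {ℓ : ℕ} {m : Fin ℓ → ℕ} {E : Fin ℓ → Finset ℕ}

lemma Admissible.inter (hadm : Admissible ℓ m E) (G : Finset ℕ) :
    Admissible ℓ m (fun i => E i ∩ G) := by
  refine ⟨hadm.1, hadm.2.1, fun i j hij a ha b hb => hadm.2.2.1 i j hij a (mem_inter.1 ha).1 b
    (mem_inter.1 hb).1, fun i j hij => (sum_le_sum fun t _ => ?_).trans_lt (hadm.2.2.2 i j hij)⟩
  exact_mod_cast card_le_card inter_subset_left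

lemma Admissible.sum_card_inter_le (hadm : Admissible ℓ m E) (S : Finset ℕ) :
    ∑ i, #(E i ∩ S) ≤ #S := by
  have hdisj : ((univ : Finset (Fin ℓ)) : Set (Fin ℓ)).PairwiseDisjoint fun i => E i ∩ S := by
    intro i _ j _ hij
    refine Disjoint.mono inter_subset_left inter_subset_left ?_
    rcases hij.lt_or_gt with h | h
    · exact (hadm.2.2.1 i j h).disjoint
    · exact (hadm.2.2.1 j i h).disjoint.symm
  rw [← card_biUnion hdisj]
  exact card_le_card (biUnion_subset.2 fun _ _ => inter_subset_right)

lemma Admissible.sum_tnorm_le {N : C00 → ℝ} (hN : IsNorm N) (hadm : Admissible ℓ m E)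
    {x : C00} {C : ℝ} (hC : 0 ≤ C) (h : ∀ G, N (restr G x) ≤ C) :
    ∑ i, tnorm N (m i) (restr (E i) x) ≤ C * #x.support :=
  calc ∑ i, tnorm N (m i) (restr (E i) x) ≤ ∑ i, C * #(E i ∩ x.support) :=
        sum_le_sum fun i _ => tnorm_restr_le_mul_card hN hC h (E i)
    _ = C * ∑ i, (#(E i ∩ x.support) : ℝ) := by rw [mul_sum]
    _ ≤ C * #x.support := by
        gcongr
        exact_mod_cast hadm.sum_card_inter_le x.support

end Admissible

def admissibleValues (N : C00 → ℝ) (ℓ : ℕ) (x : C00) : Set ℝ :=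
  {r | ∃ (m : Fin ℓ → ℕ) (E : Fin ℓ → Finset ℕ), Admissible ℓ m E ∧
    r = (1 / f ℓ) * ∑ i, tnorm N (m i) (restr (E i) x)}

section NormL

variable {N : C00 → ℝ}

lemma normL_eq_sSup (ℓ : ℕ) (x : C00) : normL N ℓ x = sSup (admissibleValues N ℓ x) := rfl

lemma admissibleValues_nonempty (N : C00 → ℝ) (ℓ : ℕ) (x : C00) :
    (admissibleValues N ℓ x).Nonempty :=
  ⟨_, _, _, admissible_empty ℓ, rfl⟩

lemma Eq22.eq_max (hEq : Eq22 N) (x : C00) :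
    N x = max (supNorm x) (sSup (⋃ ℓ, admissibleValues N ℓ x)) := by
  rw [hEq x]
  simp only [admissibleValues, Set.iUnion_ofPred]

lemma admissibleValues_restr_subset (ℓ : ℕ) (G : Finset ℕ) (x : C00) :
    admissibleValues N ℓ (restr G x) ⊆ admissibleValues N ℓ x := by
  rintro _ ⟨m, E, hadm, rfl⟩
  exact ⟨m, _, hadm.inter G, by simp only [restr_restr]⟩

lemma le_mul_card_div_f {C : ℝ} (hN : IsNorm N) {x : C00} (hC : 0 ≤ C)
    (h : ∀ G, N (restr G x) ≤ C) {ℓ : ℕ} {r : ℝ} (hr : r ∈ admissibleValues N ℓ x) :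
    r ≤ C * #x.support / f ℓ := by
  obtain ⟨m, E, hadm, rfl⟩ := hr
  rw [one_div_mul_eq_div]
  exact div_le_div_of_nonneg_right (hadm.sum_tnorm_le hN hC h) (f_nonneg ℓ)

lemma exists_norm_restr_le (hN : IsNorm N) (x : C00) :
    ∃ C, 0 ≤ C ∧ ∀ G, N (restr G x) ≤ C := by
  have hP : x.support.powerset.Nonempty := ⟨∅, empty_mem_powerset _⟩
  refine ⟨x.support.powerset.sup' hP fun H => N (restr H x), ?_, fun G => ?_⟩
  · exact (le_sup' (fun H => N (restr H x)) (empty_mem_powerset _)).trans' (hN.nonneg _)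
  · rw [← restr_inter_support]
    exact le_sup' (fun H => N (restr H x)) (mem_powerset.2 inter_subset_right)

lemma bddAbove_iUnion_admissibleValues (hN : IsNorm N) (x : C00) :
    BddAbove (⋃ ℓ, admissibleValues N ℓ x) := by
  obtain ⟨C, hC, h⟩ := exists_norm_restr_le hN x
  refine ⟨C * #x.support, ?_⟩
  simp only [mem_upperBounds, Set.mem_iUnion]
  rintro r ⟨ℓ, hr⟩
  exact (le_mul_card_div_f hN hC h hr).trans (div_f_le_self (by positivity) ℓ)

lemma bddAbove_admissibleValues (hN : IsNorm N) (ℓ : ℕ) (x : C00) :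
    BddAbove (admissibleValues N ℓ x) :=
  (bddAbove_iUnion_admissibleValues hN x).mono
    (Set.subset_iUnion (fun ℓ => admissibleValues N ℓ x) ℓ)

lemma iUnion_admissibleValues_nonempty (N : C00 → ℝ) (x : C00) :
    (⋃ ℓ, admissibleValues N ℓ x).Nonempty :=
  Set.nonempty_iUnion.2 ⟨0, admissibleValues_nonempty N 0 x⟩

lemma supNorm_le_norm (hEq : Eq22 N) (x : C00) : supNorm x ≤ N x :=
  (hEq.eq_max x).ge.trans' (le_max_left _ _)

lemma norm_restr_le (hN : IsNorm N) (hEq : Eq22 N) (G : Finset ℕ) (x : C00) :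
    N (restr G x) ≤ N x := by
  rw [hEq.eq_max, hEq.eq_max x]
  exact max_le_max (supNorm_restr_le G x) <|
    csSup_le_csSup (bddAbove_iUnion_admissibleValues hN x) (iUnion_admissibleValues_nonempty N _)
      (Set.iUnion_mono fun ℓ => admissibleValues_restr_subset ℓ G x)

lemma normL_le_norm (hN : IsNorm N) (hEq : Eq22 N) (ℓ : ℕ) (x : C00) : normL N ℓ x ≤ N x :=
  calc normL N ℓ x ≤ sSup (⋃ ℓ, admissibleValues N ℓ x) :=
        csSup_le_csSup (bddAbove_iUnion_admissibleValues hN x) (admissibleValues_nonempty N ℓ x)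
          (Set.subset_iUnion (fun ℓ => admissibleValues N ℓ x) ℓ)
    _ ≤ N x := (hEq.eq_max x).ge.trans' (le_max_right _ _)

lemma normL_restr_le (hN : IsNorm N) (ℓ : ℕ) (G : Finset ℕ) (x : C00) :
    normL N ℓ (restr G x) ≤ normL N ℓ x :=
  csSup_le_csSup (bddAbove_admissibleValues hN ℓ x) (admissibleValues_nonempty N ℓ _)
    (admissibleValues_restr_subset ℓ G x)

lemma normL_zero (x : C00) : normL N 0 x = 0 := by
  rw [normL_eq_sSup, ← csSup_singleton (0 : ℝ)]
  congr 1
  ext r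
  refine ⟨fun ⟨m, E, _, hr⟩ => by simpa using hr, fun hr => ?_⟩
  obtain ⟨r', hr'⟩ := admissibleValues_nonempty N 0 x
  obtain ⟨m, E, hadm, rfl⟩ := hr'
  exact ⟨m, E, hadm, by simpa using hr⟩

/-- The supremum in (2.2) is attained: the `ℓ ≥ 2 ^ |supp x|` contribute at most
`|supp x| ‖x‖ / f(2 ^ |supp x|) < ‖x‖`. -/
lemma exists_norm_eq_normL (hN : IsNorm N) (hEq : Eq22 N) {x : C00} (hx : supNorm x < N x) :
    ∃ ℓ, N x = normL N ℓ x := by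
  have hNx : N x = sSup (⋃ ℓ, admissibleValues N ℓ x) := by
    rcases max_choice (supNorm x) (sSup (⋃ ℓ, admissibleValues N ℓ x)) with h | h
    · exact absurd (h ▸ hEq.eq_max x) hx.ne'
    · exact h ▸ hEq.eq_max x
  have hpos : 0 < N x := (supNorm_nonneg x).trans_lt hx
  set L := 2 ^ #x.support
  have hL : 0 < f L := f_pos Nat.one_le_two_pow
  obtain ⟨ℓ₀, -, hℓ₀⟩ := (range L).exists_max_image (fun ℓ => normL N ℓ x)
    ⟨0, mem_range.2 Nat.one_le_two_pow⟩
  have htail : N x * #x.support / f L < N x := by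
    rw [div_lt_iff₀ hL]
    exact mul_lt_mul_of_pos_left (lt_f_two_pow _) hpos
  have hle : N x ≤ max (normL N ℓ₀ x) (N x * #x.support / f L) := by
    refine hNx.le.trans (csSup_le (iUnion_admissibleValues_nonempty N x) ?_)
    simp only [Set.mem_iUnion]
    rintro r ⟨ℓ, hr⟩
    rcases lt_or_ge ℓ L with hℓ | hℓ
    · exact le_max_of_le_left <|
        (le_csSup (bddAbove_admissibleValues hN ℓ x) hr).trans (hℓ₀ ℓ (mem_range.2 hℓ))
    · refine le_max_of_le_right <|
        (le_mul_card_div_f hN hpos.le (norm_restr_le hN hEq · x) hr).trans ?_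
      exact div_le_div_of_nonneg_left (by positivity) hL (f_mono hℓ)
  exact ⟨ℓ₀, le_antisymm ((le_max_iff.1 hle).resolve_right htail.not_ge)
    (normL_le_norm hN hEq ℓ₀ x)⟩

end NormL

def NormDropsOnProperRestrictions (N : C00 → ℝ) (y : C00) : Prop :=
  ∀ G : Finset ℕ, ¬ y.support ⊆ G → N (restr G y) < N y

lemma exists_restr_normDropsOnProperRestrictions (N : C00 → ℝ) (x : C00) :
    ∃ H, N x ≤ N (restr H x) ∧ NormDropsOnProperRestrictions N (restr H x) := by
  induction h : #x.support using Nat.strong_induction_on generalizing x with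
  | _ n ih =>
  by_cases hx : NormDropsOnProperRestrictions N x
  · exact ⟨x.support, by rw [restr_of_support_subset subset_rfl],
      by rwa [restr_of_support_subset subset_rfl]⟩
  · obtain ⟨G, hG, hle⟩ : ∃ G, ¬ x.support ⊆ G ∧ N x ≤ N (restr G x) := by
      simpa [NormDropsOnProperRestrictions] using hx
    obtain ⟨H, hH, hdrop⟩ :=
      ih _ (h ▸ card_lt_card (support_restr_ssubset hG)) (restr G x) rfl
    exact ⟨H ∩ G, hle.trans (by rwa [← restr_restr]), by rwa [← restr_restr]⟩

lemma normL_one_le {N : C00 → ℝ} {y : C00} {M : ℝ} (hy : y.support.Nonempty) (hMy : M ≤ N y)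
    (hM : ∀ G, ¬ y.support ⊆ G → N (restr G y) ≤ M) :
    normL N 1 y ≤ (N y + M) / 2 := by
  refine csSup_le (admissibleValues_nonempty N 1 y) ?_
  rintro _ ⟨m, E, hadm, rfl⟩
  rw [f_one, Fin.sum_univ_one, div_one, one_mul]
  refine tnorm_le_half_add (hadm.1 0) hy hMy (fun F => ?_) (fun F hF => ?_) <;>
    rw [restr_restr]
  · by_cases h : y.support ⊆ F ∩ E 0
    · rw [restr_of_support_subset h]
    · exact (hM _ h).trans hMy
  · exact hM _ fun h => hF (h.trans inter_subset_left)

lemma normL_one_lt {N : C00 → ℝ} {y : C00} (hy : y ≠ 0)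
    (hdrop : NormDropsOnProperRestrictions N y) : normL N 1 y < N y := by
  have hs : y.support.Nonempty := Finsupp.support_nonempty_iff.2 hy
  set P := y.support.powerset.erase y.support
  have hP : P.Nonempty := ⟨∅, mem_erase.2 ⟨hs.ne_empty.symm, empty_mem_powerset _⟩⟩
  set M := P.sup' hP fun H => N (restr H y)
  have hMy : M < N y := (sup'_lt_iff hP).2 fun H hH => hdrop H fun h =>
    (mem_erase.1 hH).1 (subset_antisymm (mem_powerset.1 (mem_erase.1 hH).2) h)
  have hM : ∀ G, ¬ y.support ⊆ G → N (restr G y) ≤ M := fun G hG => by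
    rw [← restr_inter_support]
    refine le_sup' (fun H => N (restr H y)) (mem_erase.2 ⟨fun h => hG ?_, mem_powerset.2 ?_⟩)
    · exact h ▸ inter_subset_left
    · exact inter_subset_right
  linarith [normL_one_le hs hMy.le hM]

/-- Remark 2.4: if `‖x‖ ≠ ‖x‖_∞` then `‖x‖ = ‖x‖_ℓ` for some `ℓ > 1`. -/
theorem statement8 (N : C00 → ℝ) (hN : IsNorm N) (hEq : Eq22 N)
    (x : C00) (hx : N x ≠ supNorm x) :
    ∃ ℓ : ℕ, 1 < ℓ ∧ N x = normL N ℓ x := by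
  obtain ⟨H, hle, hdrop⟩ := exists_restr_normDropsOnProperRestrictions N x
  have hNy : N (restr H x) = N x := le_antisymm (norm_restr_le hN hEq H x) hle
  have hy : supNorm (restr H x) < N (restr H x) :=
    hNy ▸ (supNorm_restr_le H x).trans_lt ((supNorm_le_norm hEq x).lt_of_ne' hx)
  have hy0 : restr H x ≠ 0 := fun h => by
    rw [h, hN.map_zero] at hy
    exact (supNorm_nonneg 0).not_gt hy
  obtain ⟨ℓ, hℓ⟩ := exists_norm_eq_normL hN hEq hy
  refine ⟨ℓ, ?_, le_antisymm ?_ (normL_le_norm hN hEq ℓ x)⟩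
  · by_contra! hℓ1
    interval_cases ℓ
    · rw [normL_zero] at hℓ
      linarith [supNorm_nonneg (restr H x)]
    · exact (normL_one_lt hy0 hdrop).ne' hℓ
  · calc N x = N (restr H x) := hNy.symm
      _ = normL N ℓ (restr H x) := hℓ
      _ ≤ normL N ℓ x := normL_restr_le hN ℓ H x
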